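/- Bisimilarity of singular and stopwatch games: Let G_S be an initialized singular game and let G_W be the stopwatch game obtained from G_S by the flow-normalization construction. Then T(G_S) and T(G_W) are alternating bisimilar: the relation γ1 = {((l,v),(l,v*)) : v*(x) = v(x)/flow(l,x) if flow(l,x) ≠ 0, v*(x) = v(x) otherwise} witnesses T(G_S) ≼ T(G_W) and its inverse γ1⁻¹ witnesses T(G_W) ≼ T(G_S). -/

import Mathlib

/-!
Turn-based game structures, alternating simulation, and related notions,
following Dima, Hammami, Oualhadj, Laleau,
"Deciding the synthesis problem for hybrid games through bisimulation".
-/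

/-- A turn-based game structure over a set of observations `Obs`:
configurations (partitioned between Player 1 and Player 2 via `isP1`),
an initial Player-1 configuration, moves, a transition relation
(`trans p m p'` holds when the -- partial, possibly nondeterministic --
 transition function is defined on `(p, m)` with value `p'`),
and a labeling of configurations by observations. -/
structure TBGame (Obs : Type) where
  /-- configurations -/
  Conf : Type
  /-- moves -/
  Mv : Type
  /-- the configurations owned by Player 1 (the others belong to Player 2) -/
  isP1 : Conf → Prop
  /-- initial configuration -/
  init : Conf
  /-- the initial configuration belongs to Player 1 -/
  init_p1 : isP1 init
  /-- the transitions -/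
  trans : Conf → Mv → Conf → Prop
  /-- labeling of configurations with observations -/
  lbl : Conf → Obs

/-- `R` is an alternating simulation between `G1` and `G2`:
it relates only same-player configurations, preserves labels,
every Player-1 transition of `G1` from `p` is matched by some transition
of `G2` from `q` staying in `R`, and every Player-2 transition of `G2`
from `q` is matched by some transition of `G1` from `p` staying in `R`. -/
def IsAltSim {Obs : Type} (G1 G2 : TBGame Obs) (R : G1.Conf → G2.Conf → Prop) : Prop :=
  (∀ p q, R p q → G1.lbl p = G2.lbl q) ∧
  (∀ p q, R p q → (G1.isP1 p ↔ G2.isP1 q)) ∧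
  (∀ p q, R p q → G1.isP1 p →
      ∀ m p', G1.trans p m p' → ∃ m' q', G2.trans q m' q' ∧ R p' q') ∧
  (∀ p q, R p q → ¬ G1.isP1 p →
      ∀ m' q', G2.trans q m' q' → ∃ m p', G1.trans p m p' ∧ R p' q')

/-- `R` witnesses `T(G1) ≼ T(G2)` : `R` is an alternating simulation
containing the pair of initial configurations. -/
def Simulates {Obs : Type} (G1 G2 : TBGame Obs) (R : G1.Conf → G2.Conf → Prop) : Prop :=
  IsAltSim G1 G2 R ∧ R G1.init G2.init

/-- The data of an edge of a hybrid game: source and target locations, an action,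
a simple compact constraint assigning to each variable `x` the compact rational
interval `[lo x, hi x]`, and a reset function `rst : X → ℚ ∪ {⊥}`
(`none` meaning `⊥`, i.e. no reset). -/
structure EdgeData (L X Act : Type) where
  src : L
  act : Act
  lo : X → ℚ
  hi : X → ℚ
  rst : X → Option ℚ
  tgt : L

/-- An initialized singular game (ISR game): locations partitioned between the
two players, an initial Player-1 location, rational flows (slopes) for each
variable in each location, observations labeling the locations, and a set of
edges, subject to the initialization condition: any variable whose flow changes
across an edge is reset on that edge. -/
structure ISRGame (L X Act Obs : Type) where
  /-- the locations owned by Player 1 (the others belong to Player 2) -/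
  isL1 : L → Prop
  /-- initial location -/
  l0 : L
  l0_p1 : isL1 l0
  /-- labeling of locations with observations -/
  lbl : L → Obs
  /-- the slope of each variable in each location -/
  flow : L → X → ℚ
  /-- the edges -/
  E : Set (EdgeData L X Act)
  /-- initialization: whenever the flow of `x` differs between the two endpoints
  of an edge, `x` is reset on that edge -/
  initialized : ∀ e ∈ E, ∀ x, flow e.src x ≠ flow e.tgt x → e.rst x ≠ none

/-- The semantics `T(G)` of an ISR game `G` as a turn-based game structure:
configurations are pairs (location, valuation of the variables in `ℝ`),
the initial configuration is `(l0, 0)`, moves are pairs (action, nonnegative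
delay), and `(l,v) →⁽ᵃ'ᵗ⁾ (l',v')` whenever some edge `e = (l,a,φ_e,rst_e,l')`
satisfies `v x + t · flow l x ∈ φ_e x` for all `x`, `v' x = rst_e x` when
`rst_e x ≠ ⊥`, and `v' x = v x + t · flow l x` otherwise. -/
def ISRGame.semantics {L X Act Obs : Type} (G : ISRGame L X Act Obs) : TBGame Obs where
  Conf := L × (X → ℝ)
  Mv := Act × NNReal
  isP1 := fun c => G.isL1 c.1
  init := (G.l0, fun _ => 0)
  init_p1 := G.l0_p1
  lbl := fun c => G.lbl c.1
  trans := fun c m c' =>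
    ∃ e ∈ G.E, e.src = c.1 ∧ e.act = m.1 ∧ e.tgt = c'.1 ∧
      (∀ x, (e.lo x : ℝ) ≤ c.2 x + (m.2 : ℝ) * (G.flow c.1 x : ℝ) ∧
            c.2 x + (m.2 : ℝ) * (G.flow c.1 x : ℝ) ≤ (e.hi x : ℝ)) ∧
      (∀ x, c'.2 x =
        (e.rst x).elim (c.2 x + (m.2 : ℝ) * (G.flow c.1 x : ℝ)) (fun r => (r : ℝ)))

/-- The transformation of an edge of an initialized singular game into an edge
of the associated stopwatch game: the constraint of each variable is divided
by the flow of the variable in the source location (when nonzero; the division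
of a compact interval by a negative rational swaps its endpoints), and the reset
value of each reset variable is divided by the flow of the variable in the
target location (when nonzero). -/
def stopwatchEdge {L X Act Obs : Type} (G : ISRGame L X Act Obs)
    (e : EdgeData L X Act) : EdgeData L X Act where
  src := e.src
  act := e.act
  lo := fun x =>
    if G.flow e.src x = 0 then e.lo x
    else if 0 < G.flow e.src x then e.lo x / G.flow e.src x
    else e.hi x / G.flow e.src x
  hi := fun x =>
    if G.flow e.src x = 0 then e.hi x
    else if 0 < G.flow e.src x then e.hi x / G.flow e.src x
    else e.lo x / G.flow e.src x
  rst := fun x =>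
    (e.rst x).map (fun c => if G.flow e.tgt x = 0 then c else c / G.flow e.tgt x)
  tgt := e.tgt

/-- The initialized stopwatch game `G_W` obtained from an initialized singular
game `G_S` by flow normalization: the flow of each variable becomes `0` if it
was `0` and `1` otherwise, and constraints and resets are rescaled accordingly. -/
def stopwatchOf {L X Act Obs : Type} (G : ISRGame L X Act Obs) : ISRGame L X Act Obs where
  isL1 := G.isL1
  l0 := G.l0
  l0_p1 := G.l0_p1
  lbl := G.lbl
  flow := fun l x => if G.flow l x = 0 then 0 else 1
  E := stopwatchEdge G '' G.E
  initialized := by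
    rintro e ⟨e0, he0, rfl⟩ x hx
    have hne : G.flow e0.src x ≠ G.flow e0.tgt x := by
      intro h
      exact hx (by
        show (if G.flow e0.src x = 0 then (0 : ℚ) else 1) =
          (if G.flow e0.tgt x = 0 then (0 : ℚ) else 1)
        rw [h])
    have h0 := G.initialized e0 he0 x hne
    simp only [stopwatchEdge]
    cases hr : e0.rst x with
    | none => exact absurd hr h0
    | some c => simp [hr]

/-- `stopwatchOf G` is indeed a stopwatch game : all flows are `0` or `1`. -/
theorem stopwatchOf_flow {L X Act Obs : Type} (G : ISRGame L X Act Obs) (l : L) (x : X) :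
    (stopwatchOf G).flow l x = 0 ∨ (stopwatchOf G).flow l x = 1 := by
  by_cases h : G.flow l x = 0 <;> simp [stopwatchOf, h]

/-- The transformed valuation `v*` : `v* x = v x / flow l x` when `flow l x ≠ 0`,
and `v* x = v x` otherwise. -/
noncomputable def vstar {L X : Type} (flow : L → X → ℚ) (l : L) (v : X → ℝ) : X → ℝ :=
  fun x => if flow l x = 0 then v x else v x / (flow l x : ℝ)

/-- The relation (graph of the map) `γ1 (l,v) = (l, v*)` between configurations
of `T(G_S)` and configurations of `T(G_W)`. -/
def gamma1 {L X Act Obs : Type} (G : ISRGame L X Act Obs) :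
    (ISRGame.semantics G).Conf → (ISRGame.semantics (stopwatchOf G)).Conf → Prop :=
  fun p q => q.1 = p.1 ∧ q.2 = vstar G.flow p.1 p.2

/-! Dividing every variable by its (nonzero) flow turns its slope into `1` and rescales guards and
resets by the same factor, so `(l, v) ↦ (l, v*)` maps the transitions of `T(G_S)` exactly onto
those of `T(G_W)`: it is a bounded morphism, and the graph of a bounded morphism is an alternating
simulation in both directions. Initialization is what makes this work for variables that are not
reset: their flow, hence their scaling factor, is the same in the source and target locations. -/

namespace TBGame

variable {Obs : Type}

structure IsBoundedMorphism (G1 G2 : TBGame Obs) (f : G1.Conf → G2.Conf) : Prop where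
  lbl_eq : ∀ p, G2.lbl (f p) = G1.lbl p
  isP1_iff : ∀ p, G2.isP1 (f p) ↔ G1.isP1 p
  map_init : f G1.init = G2.init
  map_trans : ∀ {p m p'}, G1.trans p m p' → ∃ m', G2.trans (f p) m' (f p')
  lift_trans : ∀ {p m' q'}, G2.trans (f p) m' q' → ∃ m p', G1.trans p m p' ∧ f p' = q'

namespace IsBoundedMorphism

variable {G1 G2 : TBGame Obs} {f : G1.Conf → G2.Conf}

theorem simulates (hf : IsBoundedMorphism G1 G2 f) : Simulates G1 G2 (fun p q => f p = q) := by
  refine ⟨⟨?_, ?_, ?_, ?_⟩, hf.map_init⟩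
  · rintro p _ rfl
    exact (hf.lbl_eq p).symm
  · rintro p _ rfl
    exact (hf.isP1_iff p).symm
  · rintro p _ rfl - m p' hp
    obtain ⟨m', hq⟩ := hf.map_trans hp
    exact ⟨m', f p', hq, rfl⟩
  · rintro p _ rfl - m' q' hq
    exact hf.lift_trans hq

theorem simulates_symm (hf : IsBoundedMorphism G1 G2 f) :
    Simulates G2 G1 (fun q p => f p = q) := by
  refine ⟨⟨?_, ?_, ?_, ?_⟩, hf.map_init⟩
  · rintro _ p rfl
    exact hf.lbl_eq p
  · rintro _ p rfl
    exact hf.isP1_iff p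
  · rintro _ p rfl - m' q' hq
    obtain ⟨m, p', hp, rfl⟩ := hf.lift_trans hq
    exact ⟨m, p', hp, rfl⟩
  · rintro _ p rfl - m p' hp
    obtain ⟨m', hq⟩ := hf.map_trans hp
    exact ⟨m', f p', hq, rfl⟩

end IsBoundedMorphism

end TBGame

namespace EdgeData

variable {L X Act : Type}

def reset (e : EdgeData L X Act) (v : X → ℝ) : X → ℝ :=
  fun x => (e.rst x).elim (v x) (fun r => (r : ℝ))

end EdgeData

namespace ISRGame

variable {L X Act Obs : Type} (G : ISRGame L X Act Obs)

def delay (l : L) (v : X → ℝ) (t : ℝ) : X → ℝ :=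
  fun x => v x + t * G.flow l x

theorem semantics_trans_iff {l l' : L} {v v' : X → ℝ} {m : Act × NNReal} :
    G.semantics.trans (l, v) m (l', v') ↔
      ∃ e ∈ G.E, e.src = l ∧ e.act = m.1 ∧ e.tgt = l' ∧
        (∀ x, (e.lo x : ℝ) ≤ G.delay l v m.2 x ∧ G.delay l v m.2 x ≤ e.hi x) ∧
        v' = e.reset (G.delay l v m.2) :=
  ⟨fun ⟨e, he, hsrc, hact, htgt, hguard, hrst⟩ => ⟨e, he, hsrc, hact, htgt, hguard, funext hrst⟩,
    fun ⟨e, he, hsrc, hact, htgt, hguard, hrst⟩ =>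
      ⟨e, he, hsrc, hact, htgt, hguard, congrFun hrst⟩⟩

noncomputable def toStopwatch (c : G.semantics.Conf) : (stopwatchOf G).semantics.Conf :=
  (c.1, vstar G.flow c.1 c.2)

theorem gamma1_eq : gamma1 G = fun p q => G.toStopwatch p = q := by
  funext p q
  exact propext ⟨fun ⟨h1, h2⟩ => Prod.ext h1.symm h2.symm, fun h => h ▸ ⟨rfl, rfl⟩⟩

theorem vstar_delay (l : L) (v : X → ℝ) (t : ℝ) :
    vstar G.flow l (G.delay l v t) = (stopwatchOf G).delay l (vstar G.flow l v) t := by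
  funext x
  by_cases h : G.flow l x = 0
  · simp [vstar, delay, stopwatchOf, h]
  · have h' : (G.flow l x : ℝ) ≠ 0 := by exact_mod_cast h
    simp only [vstar, delay, stopwatchOf, if_neg h, Rat.cast_one]
    field_simp

theorem stopwatchEdge_guard_iff (e : EdgeData L X Act) (v : X → ℝ) (x : X) :
    (((stopwatchEdge G e).lo x : ℝ) ≤ vstar G.flow e.src v x ∧
        vstar G.flow e.src v x ≤ (stopwatchEdge G e).hi x) ↔
      ((e.lo x : ℝ) ≤ v x ∧ v x ≤ e.hi x) := by
  simp only [stopwatchEdge, vstar]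
  rcases lt_trichotomy (G.flow e.src x) 0 with hneg | hzero | hpos
  · have hneg' : (G.flow e.src x : ℝ) < 0 := by exact_mod_cast hneg
    simp only [if_neg hneg.ne, if_neg hneg.not_gt, Rat.cast_div,
      div_le_div_right_of_neg hneg']
    exact and_comm
  · simp only [hzero, if_true]
  · have hpos' : (0 : ℝ) < G.flow e.src x := by exact_mod_cast hpos
    simp only [if_neg hpos.ne', if_pos hpos, Rat.cast_div, div_le_div_iff_of_pos_right hpos']

theorem vstar_reset {e : EdgeData L X Act} (he : e ∈ G.E) (v : X → ℝ) :
    vstar G.flow e.tgt (e.reset v) = (stopwatchEdge G e).reset (vstar G.flow e.src v) := by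
  funext x
  cases hr : e.rst x with
  | some r =>
    by_cases h : G.flow e.tgt x = 0 <;> simp [EdgeData.reset, stopwatchEdge, vstar, hr, h]
  | none =>
    have hflow : G.flow e.src x = G.flow e.tgt x := by
      by_contra hne
      exact G.initialized e he x hne hr
    simp [EdgeData.reset, stopwatchEdge, vstar, hr, hflow]

theorem isBoundedMorphism_toStopwatch :
    TBGame.IsBoundedMorphism G.semantics (stopwatchOf G).semantics G.toStopwatch where
  lbl_eq _ := rfl
  isP1_iff _ := Iff.rfl
  map_init := Prod.ext rfl <| funext fun _ => by simp [toStopwatch, vstar, semantics]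
  map_trans := by
    rintro ⟨l, v⟩ (m : Act × NNReal) ⟨l', v'⟩ h
    obtain ⟨e, he, rfl, hact, rfl, hguard, rfl⟩ := G.semantics_trans_iff.mp h
    refine ⟨m, (stopwatchOf G).semantics_trans_iff.mpr
      ⟨stopwatchEdge G e, ⟨e, he, rfl⟩, rfl, hact, rfl, fun x => ?_, ?_⟩⟩
    · rw [← vstar_delay]
      exact (G.stopwatchEdge_guard_iff e _ x).mpr (hguard x)
    · rw [G.vstar_reset he, vstar_delay]
  lift_trans := by
    rintro ⟨l, v⟩ (m : Act × NNReal) ⟨l', w'⟩ h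
    obtain ⟨_, ⟨e, he, rfl⟩, rfl, hact, rfl, hguard, rfl⟩ :=
      (stopwatchOf G).semantics_trans_iff.mp h
    refine ⟨m, (e.tgt, e.reset (G.delay e.src v m.2)), G.semantics_trans_iff.mpr
      ⟨e, he, rfl, hact, rfl, fun x => ?_, rfl⟩, ?_⟩
    · refine (G.stopwatchEdge_guard_iff e (G.delay e.src v m.2) x).mp ?_
      rw [vstar_delay]
      exact hguard x
    · refine Prod.ext rfl ?_
      change vstar G.flow e.tgt (e.reset (G.delay e.src v m.2)) = _
      rw [G.vstar_reset he, vstar_delay]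
      rfl

end ISRGame

theorem singular_stopwatch_bisimilar_general {L X Act Obs : Type}
    (G : ISRGame L X Act Obs) :
    Simulates (ISRGame.semantics G) (ISRGame.semantics (stopwatchOf G)) (gamma1 G) ∧
    Simulates (ISRGame.semantics (stopwatchOf G)) (ISRGame.semantics G)
      (fun q p => gamma1 G p q) := by
  rw [G.gamma1_eq]
  exact ⟨G.isBoundedMorphism_toStopwatch.simulates, G.isBoundedMorphism_toStopwatch.simulates_symm⟩

/-- **Bisimilarity of singular and stopwatch games.** `T(G_S)` and `T(G_W)` are
alternating bisimilar: `γ1` witnesses `T(G_S) ≼ T(G_W)` and its inverse `γ1⁻¹`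
witnesses `T(G_W) ≼ T(G_S)`. -/
theorem singular_stopwatch_bisimilar {L X Act Obs : Type}
    [Fintype L] [Fintype X] [Fintype Act] [Fintype Obs]
    (G : ISRGame L X Act Obs) (hE : G.E.Finite) :
    Simulates (ISRGame.semantics G) (ISRGame.semantics (stopwatchOf G)) (gamma1 G) ∧
    Simulates (ISRGame.semantics (stopwatchOf G)) (ISRGame.semantics G)
      (fun q p => gamma1 G p q) :=
  singular_stopwatch_bisimilar_general G
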